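/- arXiv:2507.12352 — 2 statements merged into one kernel-verified Lean document; each statement's English description precedes it below -/
import Mathlib

section
/- For every n ≥ 1, every k ≥ 1 and every x = (x_1,…,x_k) ∈ ℚ^k, one has f_{2n+1}(x) = Σ_{j=0}^n (−1)^j A_{2j+1} C(2n+1, 2j+1) f_1(x)^{2j+1} f_{2n−2j}(x), where C(a,b) denotes the binomial coefficient. -/
open Finset

/-- The `m`-th power sum `p_m(x) = Σ_i x_i^m`. -/
def psum {k : ℕ} (m : ℕ) (x : Fin k → ℚ) : ℚ := ∑ i, x i ^ m

/-- The weight function `φ_U` on partitions of `t`. -/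
noncomputable def phiU (t : ℕ) (μ : Nat.Partition t) : ℚ :=
  ((2 * t + 1).factorial : ℚ) * 4 ^ t *
    ∏ j ∈ Finset.Icc 1 t,
      (1 / ((μ.parts.count j).factorial : ℚ)) *
        (bernoulli (2 * j) / ((2 * j) * (2 * j).factorial)) ^ (μ.parts.count j)

/-- `u_{2t}(x) = Σ_{λ⊢t} φ_U(λ) Π_j p_{2j}(x)^{m_j}`. -/
noncomputable def u2 {k : ℕ} (t : ℕ) (x : Fin k → ℚ) : ℚ :=
  ∑ μ : Nat.Partition t,
    phiU t μ * ∏ j ∈ Finset.Icc 1 t, (psum (2 * j) x) ^ (μ.parts.count j)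

/-- `ũ_{2t}(x) = Σ_{λ⊢t} φ_U(λ) Π_j (−p_{2j}(x))^{m_j}`. -/
noncomputable def ut2 {k : ℕ} (t : ℕ) (x : Fin k → ℚ) : ℚ :=
  ∑ μ : Nat.Partition t,
    phiU t μ * ∏ j ∈ Finset.Icc 1 t, (-(psum (2 * j) x)) ^ (μ.parts.count j)

/-- `P_n(x) = Σ_{∅≠S⊆{1,…,k}} (−1)^{|S|−1} (Σ_{i∈S} x_i)^n`. -/
def Pn {k : ℕ} (n : ℕ) (x : Fin k → ℚ) : ℚ :=
  ∑ S ∈ (Finset.univ : Finset (Fin k)).powerset.erase ∅,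
    (-1 : ℚ) ^ (S.card - 1) * (∑ i ∈ S, x i) ^ n

/-- `T_n(x) = Σ_{|a|=n} (n!/Π a_i!) Π_i x_i^{a_i}/(a_i+1)`. -/
def Tpoly {k : ℕ} (n : ℕ) (x : Fin k → ℚ) : ℚ :=
  ∑ a ∈ Finset.Nat.antidiagonalTuple k n,
    ((n.factorial : ℚ) / ∏ i, ((a i).factorial : ℚ)) * ∏ i, x i ^ (a i) / (a i + 1)

/-- `f_n(x) = Σ_{|a|=n} (n!/Π a_i!) Π_i (−1)^{a_i} B_{a_i} x_i^{a_i}`. -/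
noncomputable def fpoly {k : ℕ} (n : ℕ) (x : Fin k → ℚ) : ℚ :=
  ∑ a ∈ Finset.Nat.antidiagonalTuple k n,
    ((n.factorial : ℚ) / ∏ i, ((a i).factorial : ℚ)) *
      ∏ i, (-1) ^ (a i) * bernoulli (a i) * x i ^ (a i)

/-- The tangent (zig-zag) numbers `A_{2j+1}`. -/
noncomputable def tangentA (j : ℕ) : ℚ :=
  (-1) ^ j * 2 ^ (2 * j + 2) * (2 ^ (2 * j + 2) - 1) * bernoulli (2 * j + 2) / (2 * j + 2)

/-!
Let `B(z) = z/(e^z - 1)` and `G(z) = ∏ i, B(-x_i z)`, so that `f_n(x) = n! [z^n] G`.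
Since `B(-w) = e^w B(w)`, we get `G(z) = e^{sz} G(-z)` with `s = Σ x_i = 2 f_1(x)`, and therefore
`G(z) - G(-z) = tanh(f_1(x) z) (G(z) + G(-z))`: the odd part of `G` is `tanh(f_1 z)` times its even
part. Comparing the coefficients of `z^(2n+1)`, with
`tanh w = Σ (-1)^j A_{2j+1} w^(2j+1)/(2j+1)!`, gives the identity.
-/

open PowerSeries

theorem Finset.sum_range_two_mul {M : Type*} [AddCommMonoid M] (m : ℕ) (f : ℕ → M) :
    ∑ p ∈ range (2 * m), f p = ∑ i ∈ range m, (f (2 * i) + f (2 * i + 1)) := by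
  induction m with
  | zero => simp
  | succ m ih => rw [Nat.mul_succ, sum_range_succ, sum_range_succ, sum_range_succ, ih, add_assoc]

namespace PowerSeries

theorem prod_rescale_exp {A ι : Type*} [CommRing A] [Algebra ℚ A] (s : Finset ι) (c : ι → A) :
    ∏ i ∈ s, rescale (c i) (exp A) = rescale (∑ i ∈ s, c i) (exp A) := by
  induction s using Finset.cons_induction with
  | empty => simp
  | cons a s _ ih => rw [prod_cons, sum_cons, ih, exp_mul_exp_eq_exp_add]

theorem coeff_two_mul_add_one_eq_sum_of_sub_eq_mul_add {R : Type*} [CommRing R]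
    [IsAddTorsionFree R] {F T : R⟦X⟧} (hT : ∀ i, coeff (2 * i) T = 0)
    (h : F - rescale (-1) F = T * (F + rescale (-1) F)) (n : ℕ) :
    coeff (2 * n + 1) F = ∑ j ∈ range (n + 1), coeff (2 * j + 1) T * coeff (2 * (n - j)) F := by
  have hodd := congrArg (coeff (2 * n + 1)) h
  rw [map_sub, coeff_rescale, (odd_two_mul_add_one n).neg_one_pow, coeff_mul,
    Nat.sum_antidiagonal_eq_sum_range_succ_mk, Nat.succ_eq_add_one,
    show 2 * n + 1 + 1 = 2 * (n + 1) by ring, sum_range_two_mul] at hodd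
  have hterm : ∀ j ∈ range (n + 1),
      coeff (2 * j) T * coeff (2 * n + 1 - 2 * j) (F + rescale (-1) F) +
        coeff (2 * j + 1) T * coeff (2 * n + 1 - (2 * j + 1)) (F + rescale (-1) F) =
      2 • (coeff (2 * j + 1) T * coeff (2 * (n - j)) F) := by
    intro j _
    rw [hT, zero_mul, zero_add, show 2 * n + 1 - (2 * j + 1) = 2 * (n - j) by omega, map_add,
      coeff_rescale, (even_two_mul _).neg_one_pow, one_mul, two_nsmul, mul_add]
  rw [sum_congr rfl hterm, ← smul_sum, sub_eq_add_neg, neg_one_mul, neg_neg, ← two_nsmul] at hodd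
  exact IsAddTorsionFree.nsmul_right_injective two_ne_zero hodd

theorem coeff_one_prod {R ι : Type*} [CommRing R] (s : Finset ι) (f : ι → R⟦X⟧)
    (hf : ∀ i ∈ s, constantCoeff (f i) = 1) :
    coeff 1 (∏ i ∈ s, f i) = ∑ i ∈ s, coeff 1 (f i) := by
  induction s using Finset.cons_induction with
  | empty => simp
  | cons a s _ ih =>
    rw [forall_mem_cons] at hf
    rw [prod_cons, sum_cons, coeff_one_mul, ih hf.2, hf.1, map_prod, prod_eq_one hf.2]
    ring

end PowerSeries

theorem coeff_bernoulliPowerSeries_rat (n : ℕ) :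
    coeff n (bernoulliPowerSeries ℚ) = bernoulli n / n.factorial := by
  simp [bernoulliPowerSeries]

theorem rescale_neg_one_bernoulliPowerSeries :
    rescale (-1) (bernoulliPowerSeries ℚ) = bernoulliPowerSeries ℚ * exp ℚ := by
  rw [show bernoulliPowerSeries ℚ * exp ℚ = bernoulliPowerSeries ℚ + X by
    linear_combination bernoulliPowerSeries_mul_exp_sub_one ℚ]
  ext n
  rw [coeff_rescale, map_add, coeff_X, coeff_bernoulliPowerSeries_rat]
  rcases n.even_or_odd with h | h
  · rw [h.neg_one_pow, one_mul, if_neg (by rintro rfl; exact Nat.not_even_one h), add_zero]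
  · obtain rfl | h1 := eq_or_ne n 1
    · norm_num [bernoulli_one]
    · rw [bernoulli_eq_zero_of_odd h (by grind), if_neg h1]
      simp

theorem rescale_bernoulliPowerSeries_mul_rescale_exp_sub_one (a : ℚ) :
    rescale a (bernoulliPowerSeries ℚ) * (rescale a (exp ℚ) - 1) = C a * X := by
  simpa using congrArg (rescale a) (bernoulliPowerSeries_mul_exp_sub_one ℚ)

/-- From `z tanh z = 2z coth 2z - z coth z` and `(z/2) coth (z/2) = B(z) + z/2`. -/
noncomputable def tanhSeries : ℚ⟦X⟧ :=
  mk fun m => coeff (m + 1)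
    (rescale 4 (bernoulliPowerSeries ℚ) - rescale 2 (bernoulliPowerSeries ℚ) + X)

theorem X_mul_tanhSeries :
    X * tanhSeries = rescale 4 (bernoulliPowerSeries ℚ) - rescale 2 (bernoulliPowerSeries ℚ) + X := by
  ext n
  cases n with
  | zero =>
    rw [coeff_zero_X_mul, map_add, map_sub, coeff_rescale, coeff_rescale, coeff_zero_X]
    ring
  | succ n => rw [coeff_succ_X_mul, tanhSeries, coeff_mk]

theorem coeff_tanhSeries (m : ℕ) :
    coeff m tanhSeries =
      (4 ^ (m + 1) - 2 ^ (m + 1)) * bernoulli (m + 1) / (m + 1).factorial +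
        if m = 0 then 1 else 0 := by
  simp only [tanhSeries, coeff_mk, map_add, map_sub, coeff_rescale, coeff_bernoulliPowerSeries_rat,
    coeff_X, Nat.add_eq_right]
  ring

theorem coeff_two_mul_tanhSeries (i : ℕ) : coeff (2 * i) tanhSeries = 0 := by
  rw [coeff_tanhSeries]
  obtain rfl | hi := eq_or_ne i 0
  · norm_num [bernoulli_one]
  · rw [bernoulli_eq_zero_of_odd (odd_two_mul_add_one i) (by omega), if_neg (by omega)]
    simp

theorem coeff_two_mul_add_one_tanhSeries (j : ℕ) :
    coeff (2 * j + 1) tanhSeries = (-1) ^ j * tangentA j / (2 * j + 1).factorial := by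
  have hsign : ((-1 : ℚ) ^ j) * (-1) ^ j = 1 := by rw [← mul_pow]; norm_num
  rw [coeff_tanhSeries, if_neg (by omega), add_zero, tangentA, ← mul_div_assoc, ← mul_assoc,
    ← mul_assoc, ← mul_assoc, hsign, one_mul, Nat.factorial_succ (2 * j + 1),
    show (4 : ℚ) = 2 ^ 2 by norm_num, ← pow_mul]
  push_cast
  field_simp
  ring

theorem tanhSeries_mul_rescale_two_exp_add_one :
    tanhSeries * (rescale 2 (exp ℚ) + 1) = rescale 2 (exp ℚ) - 1 := by
  set E := rescale (2 : ℚ) (exp ℚ)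
  have hE : rescale (4 : ℚ) (exp ℚ) = E * E := by
    rw [exp_mul_exp_eq_exp_add]; norm_num
  have h4 := rescale_bernoulliPowerSeries_mul_rescale_exp_sub_one 4
  have h2 := rescale_bernoulliPowerSeries_mul_rescale_exp_sub_one 2
  rw [hE, map_ofNat] at h4
  rw [map_ofNat] at h2
  have hne : X * (E * E - 1) ≠ 0 := by
    refine mul_ne_zero X_ne_zero fun h => ?_
    simpa [E, ← hE, coeff_rescale] using congrArg (coeff 1) h
  refine mul_left_cancel₀ hne ?_
  linear_combination (E * E - 1) * (E + 1) * X_mul_tanhSeries + (E + 1) * h4 - (E + 1) ^ 2 * h2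

noncomputable def fpolyEGF {k : ℕ} (x : Fin k → ℚ) : ℚ⟦X⟧ :=
  ∏ i, rescale (-x i) (bernoulliPowerSeries ℚ)

theorem fpoly_eq_factorial_mul_coeff_fpolyEGF {k : ℕ} (n : ℕ) (x : Fin k → ℚ) :
    fpoly n x = n.factorial * coeff n (fpolyEGF x) := by
  rw [fpolyEGF, coeff_prod, mul_sum, fpoly]
  refine sum_nbij' (fun a => Finsupp.equivFunOnFinite.symm a) (fun l => ⇑l) ?_ ?_ ?_ ?_ ?_
  · intro a ha
    simpa [Finset.Nat.mem_antidiagonalTuple] using ha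
  · intro l hl
    exact Finset.Nat.mem_antidiagonalTuple.2 (mem_finsuppAntidiag.1 hl).1
  · intro a _
    rfl
  · intro l _
    simp
  · intro a _
    have hcoeff : ∀ i, coeff (a i) (rescale (-x i) (bernoulliPowerSeries ℚ)) =
        (-1) ^ a i * bernoulli (a i) * x i ^ a i / (a i).factorial := fun i => by
      rw [coeff_rescale, coeff_bernoulliPowerSeries_rat, neg_pow]
      ring
    rw [Finsupp.coe_equivFunOnFinite_symm, prod_congr rfl fun i _ => hcoeff i, prod_div_distrib]
    ring

theorem fpolyEGF_eq_rescale_neg_one_mul_exp {k : ℕ} (x : Fin k → ℚ) :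
    fpolyEGF x = rescale (-1) (fpolyEGF x) * rescale (∑ i, x i) (exp ℚ) := by
  have hfactor : ∀ i, rescale (-x i) (bernoulliPowerSeries ℚ) =
      rescale (x i) (bernoulliPowerSeries ℚ) * rescale (x i) (exp ℚ) := by
    intro i
    rw [← map_mul, ← rescale_neg_one_bernoulliPowerSeries, rescale_rescale, neg_one_mul]
  rw [fpolyEGF, map_prod, ← prod_rescale_exp, ← prod_mul_distrib]
  refine prod_congr rfl fun i _ => ?_
  rw [rescale_rescale, neg_mul_neg, mul_one, hfactor]

theorem fpoly_one {k : ℕ} (x : Fin k → ℚ) : fpoly 1 x = (∑ i, x i) / 2 := by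
  rw [fpoly_eq_factorial_mul_coeff_fpolyEGF, fpolyEGF, coeff_one_prod _ _ fun i _ => by
    simp [← coeff_zero_eq_constantCoeff_apply, coeff_rescale, coeff_bernoulliPowerSeries_rat]]
  simp only [coeff_rescale, coeff_bernoulliPowerSeries_rat, bernoulli_one, Nat.factorial_one,
    Nat.cast_one, one_mul, pow_one, sum_div]
  exact sum_congr rfl fun i _ => by ring

theorem fpolyEGF_sub_rescale_neg_one {k : ℕ} (x : Fin k → ℚ) :
    fpolyEGF x - rescale (-1) (fpolyEGF x) =
      rescale (fpoly 1 x) tanhSeries * (fpolyEGF x + rescale (-1) (fpolyEGF x)) := by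
  have htanh := congrArg (rescale (fpoly 1 x)) tanhSeries_mul_rescale_two_exp_add_one
  have hscale : 2 * fpoly 1 x = ∑ i, x i := by rw [fpoly_one]; ring
  rw [map_mul, map_add, map_sub, map_one, rescale_rescale, hscale] at htanh
  linear_combination (1 - rescale (fpoly 1 x) tanhSeries) * fpolyEGF_eq_rescale_neg_one_mul_exp x
    - rescale (-1) (fpolyEGF x) * htanh

theorem stmt12_general (n k : ℕ) (x : Fin k → ℚ) :
    fpoly (2 * n + 1) x =
      ∑ j ∈ Finset.range (n + 1),
        (-1 : ℚ) ^ j * tangentA j * ((2 * n + 1).choose (2 * j + 1) : ℚ) *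
          (fpoly 1 x) ^ (2 * j + 1) * fpoly (2 * n - 2 * j) x := by
  have htanh_even (i : ℕ) : coeff (2 * i) (rescale (fpoly 1 x) tanhSeries) = 0 := by
    rw [coeff_rescale, coeff_two_mul_tanhSeries, mul_zero]
  rw [fpoly_eq_factorial_mul_coeff_fpolyEGF, coeff_two_mul_add_one_eq_sum_of_sub_eq_mul_add
    htanh_even (fpolyEGF_sub_rescale_neg_one x), mul_sum]
  refine sum_congr rfl fun j hj => ?_
  have hjn : j ≤ n := Nat.lt_succ_iff.1 (mem_range.1 hj)
  have hchoose : ((2 * n + 1).choose (2 * j + 1) : ℚ) * (2 * j + 1).factorial *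
      (2 * (n - j)).factorial = (2 * n + 1).factorial := by
    have h := Nat.choose_mul_factorial_mul_factorial (show 2 * j + 1 ≤ 2 * n + 1 by omega)
    rw [show 2 * n + 1 - (2 * j + 1) = 2 * (n - j) by omega] at h
    exact_mod_cast h
  rw [coeff_rescale, coeff_two_mul_add_one_tanhSeries, show 2 * n - 2 * j = 2 * (n - j) by omega,
    fpoly_eq_factorial_mul_coeff_fpolyEGF (2 * (n - j)), ← hchoose]
  field_simp

theorem stmt12 (n k : ℕ) (hn : 1 ≤ n) (hk : 1 ≤ k) (x : Fin k → ℚ) :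
    fpoly (2 * n + 1) x =
      ∑ j ∈ Finset.range (n + 1),
        (-1 : ℚ) ^ j * tangentA j * ((2 * n + 1).choose (2 * j + 1) : ℚ) *
          (fpoly 1 x) ^ (2 * j + 1) * fpoly (2 * n - 2 * j) x :=
  stmt12_general n k x
end

section
/- Let k ≥ 1 and x = (x_1,…,x_k) ∈ ℚ^k. In ℚ[[t]], one has Π_{i=1}^k sinhc(x_i t) = exp(Σ_{n≥1} (4^n B_{2n} p_{2n}(x)/((2n)·(2n)!)) t^{2n}), where sinhc(x_i t) := Σ_{m≥0} x_i^{2m} t^{2m}/(2m+1)!. -/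
open PowerSeries Finset

/-- `exp(h) = Σ_{n≥0} h^n/n!` for a power series `h` (with zero constant term, so that
the coefficient of `z^m` only involves `h^n` for `n ≤ m`). -/
noncomputable def expPS (h : PowerSeries ℚ) : PowerSeries ℚ :=
  PowerSeries.mk fun m =>
    ∑ n ∈ Finset.range (m + 1), (PowerSeries.coeff m (h ^ n)) / n.factorial

/-- `sinhc(t) = Σ_{m≥0} t^{2m}/(2m+1)!`. -/
noncomputable def sinhc : PowerSeries ℚ :=
  PowerSeries.mk fun m => if Even m then (1 : ℚ) / (m + 1).factorial else 0

/-!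
Take logarithmic derivatives. Since `X * sinhc = sinh X`, one has
`X * sinhc' / sinhc = X coth X - 1`, and `X coth X = 2X / (e^{2X} - 1) + X` is the rescaled
Bernoulli series `Σ 4^n B_{2n} X^{2n} / (2n)!`; this is `1 + X * L'` for
`L = logSinhc = Σ_{n ≥ 1} 4^n B_{2n} X^{2n} / (2n (2n)!)`. Hence every factor `sinhc (x_i X)` satisfies
`F' = L(x_i X)' * F`, so the product satisfies `F' = R' * F` with `R = Σ_i L(x_i X)`, the exponent
on the right. The series `exp R` solves the same linear equation, and both sides have constant
term `1`.
-/

namespace PowerSeries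

variable {R : Type*} [CommRing R]

theorem derivative_rescale (a : R) (f : R⟦X⟧) :
    d⁄dX R (rescale a f) = C a * rescale a (d⁄dX R f) := by
  ext n
  simp only [coeff_derivative, coeff_rescale, coeff_C_mul, pow_succ]
  ring

theorem derivative_prod_eq_mul_prod {ι : Type*} (s : Finset ι) (F g : ι → R⟦X⟧)
    (hF : ∀ i ∈ s, d⁄dX R (F i) = d⁄dX R (g i) * F i) :
    d⁄dX R (∏ i ∈ s, F i) = d⁄dX R (∑ i ∈ s, g i) * ∏ i ∈ s, F i := by
  classical
  induction s using Finset.induction_on with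
  | empty => simp
  | insert a s ha ih =>
    rw [prod_insert ha, sum_insert ha, Derivation.leibniz, smul_eq_mul, smul_eq_mul, map_add,
      ih fun i hi => hF i (mem_insert_of_mem hi), hF a (mem_insert_self a s)]
    ring

theorem eq_of_derivative_eq_mul_self [IsAddTorsionFree R] {g F G : R⟦X⟧}
    (hF : d⁄dX R F = g * F) (hG : d⁄dX R G = g * G)
    (h0 : constantCoeff F = constantCoeff G) : F = G := by
  ext n
  induction n using Nat.strong_induction_on with
  | _ n ih =>
    cases n with
    | zero => simpa using h0
    | succ n =>
      have hd : coeff n (d⁄dX R F) = coeff n (d⁄dX R G) := by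
        rw [hF, hG, coeff_mul, coeff_mul]
        refine sum_congr rfl fun p hp => ?_
        rw [ih p.2 (Nat.antidiagonal.snd_lt hp)]
      rw [coeff_derivative, coeff_derivative, ← Nat.cast_succ, mul_comm, ← nsmul_eq_mul,
        mul_comm, ← nsmul_eq_mul] at hd
      exact (smul_right_inj n.succ_ne_zero).mp hd

end PowerSeries

theorem expPS_eq_subst {h : ℚ⟦X⟧} (h0 : constantCoeff h = 0) :
    expPS h = (exp ℚ).subst h := by
  ext m
  rw [expPS, coeff_mk, coeff_subst' (.of_constantCoeff_zero' h0),
    finsum_eq_sum_of_support_subset (s := range (m + 1))]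
  · simp [coeff_exp, div_eq_inv_mul]
  · refine Function.support_subset_iff'.2 fun n hn => ?_
    simp only [coe_range, Set.mem_Iio, not_lt] at hn
    rw [coeff_of_lt_order _ ((Nat.cast_lt.2 (by omega)).trans_le
      (le_order_pow_of_constantCoeff_eq_zero n h0)), smul_zero]

theorem derivative_expPS {h : ℚ⟦X⟧} (h0 : constantCoeff h = 0) :
    d⁄dX ℚ (expPS h) = d⁄dX ℚ h * expPS h := by
  rw [expPS_eq_subst h0, derivative_subst (.of_constantCoeff_zero' h0), derivative_exp, mul_comm]

theorem constantCoeff_expPS (h : ℚ⟦X⟧) : constantCoeff (expPS h) = 1 := by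
  rw [← coeff_zero_eq_constantCoeff_apply, expPS, coeff_mk]
  simp

noncomputable def logSinhc : ℚ⟦X⟧ :=
  mk fun m => if m ≠ 0 ∧ Even m then (4 : ℚ) ^ (m / 2) * bernoulli m / (m * m.factorial) else 0

theorem two_smul_X_mul_sinhc : 2 • (X * sinhc) = exp ℚ - rescale (-1) (exp ℚ) := by
  ext m
  cases m with
  | zero => simp [map_sub, coeff_rescale, coeff_exp]
  | succ n =>
    rw [map_nsmul, coeff_succ_X_mul, sinhc, coeff_mk, map_sub, coeff_rescale, coeff_exp]
    rcases Nat.even_or_odd n with hn | hn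
    · simp only [hn, ↓reduceIte, nsmul_eq_mul, Algebra.algebraMap_self, RingHom.id_apply,
        pow_succ, hn.neg_one_pow]
      ring
    · simp [Nat.not_even_iff_odd.2 hn, pow_succ, hn.neg_one_pow]

theorem rescale_two_bernoulliPowerSeries_add_X_mul :
    (rescale 2 (bernoulliPowerSeries ℚ) + X) * (exp ℚ - rescale (-1) (exp ℚ)) =
      X * (exp ℚ + rescale (-1) (exp ℚ)) := by
  have hB := congrArg (rescale (2 : ℚ)) (bernoulliPowerSeries_mul_exp_sub_one ℚ)
  have hE2 : rescale 2 (exp ℚ) = exp ℚ * exp ℚ := by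
    simpa [sq] using (exp_pow_eq_rescale_exp (A := ℚ) 2).symm
  rw [map_mul, map_sub, map_one, rescale_X, map_ofNat, hE2] at hB
  have hE : exp ℚ * rescale (-1) (exp ℚ) = 1 := exp_mul_exp_neg_eq_one
  linear_combination rescale (-1) (exp ℚ) * hB - rescale 2 (bernoulliPowerSeries ℚ) * exp ℚ * hE

theorem X_mul_derivative_logSinhc :
    X * d⁄dX ℚ logSinhc = rescale 2 (bernoulliPowerSeries ℚ) + X - 1 := by
  ext m
  rw [map_sub, map_add, coeff_rescale, bernoulliPowerSeries, coeff_mk, coeff_X, coeff_one]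
  match m with
  | 0 => simp
  | 1 => norm_num [coeff_succ_X_mul, coeff_derivative, logSinhc, bernoulli_one]
  | n + 2 =>
    rw [coeff_succ_X_mul, coeff_derivative, logSinhc, coeff_mk, if_neg (show n + 2 ≠ 1 by omega),
      if_neg (show n + 2 ≠ 0 by omega), add_zero, sub_zero]
    rcases Nat.even_or_odd (n + 2) with ⟨j, hj⟩ | hodd
    · have hj' : (n : ℚ) + 1 + 1 = 2 * j := by exact_mod_cast (by omega : n + 1 + 1 = 2 * j)
      rw [if_pos ⟨by omega, ⟨j, hj⟩⟩, hj, show (j + j) / 2 = j by omega, ← two_mul, pow_mul]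
      push_cast
      rw [hj']
      have : (j : ℚ) ≠ 0 := by exact_mod_cast (by omega : j ≠ 0)
      field_simp
      norm_num
    · rw [if_neg fun h => Nat.not_even_iff_odd.2 hodd h.2, bernoulli_eq_zero_of_odd hodd (by omega)]
      simp

theorem derivative_sinhc : d⁄dX ℚ sinhc = d⁄dX ℚ logSinhc * sinhc := by
  have hS := two_smul_X_mul_sinhc
  have hS' := congrArg (d⁄dX ℚ) hS
  rw [map_nsmul, Derivation.leibniz, derivative_X, map_sub, derivative_exp, derivative_rescale,
    derivative_exp] at hS'
  have hL := X_mul_derivative_logSinhc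
  have hB := rescale_two_bernoulliPowerSeries_add_X_mul
  have h2 : (2 : ℚ⟦X⟧) ≠ 0 := fun h => by
    have h := congrArg constantCoeff h
    rw [map_ofNat, map_zero] at h
    exact two_ne_zero h
  refine mul_left_cancel₀ (mul_ne_zero h2 (pow_ne_zero 2 X_ne_zero)) ?_
  simp only [smul_eq_mul, nsmul_eq_mul, map_neg, map_one, Nat.cast_ofNat] at hS hS'
  linear_combination
    X * hS' - 2 * X * sinhc * hL - hB - (rescale 2 (bernoulliPowerSeries ℚ) + X) * hS

theorem derivative_rescale_sinhc (a : ℚ) :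
    d⁄dX ℚ (rescale a sinhc) = d⁄dX ℚ (rescale a logSinhc) * rescale a sinhc := by
  rw [derivative_rescale, derivative_rescale, derivative_sinhc, map_mul, mul_assoc]

theorem constantCoeff_rescale_sinhc (a : ℚ) : constantCoeff (rescale a sinhc) = 1 := by
  simp [← coeff_zero_eq_constantCoeff_apply, coeff_rescale, sinhc]

theorem sum_rescale_logSinhc {k : ℕ} (x : Fin k → ℚ) :
    ∑ i, rescale (x i) logSinhc = mk fun m =>
      if m ≠ 0 ∧ Even m then (4 : ℚ) ^ (m / 2) * bernoulli m * psum m x / (m * m.factorial)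
      else 0 := by
  ext m
  simp only [map_sum, coeff_rescale, logSinhc, coeff_mk, psum]
  split_ifs
  · rw [← sum_mul]
    ring
  · simp

theorem stmt16_general (k : ℕ) (x : Fin k → ℚ) :
    ∏ i, PowerSeries.rescale (x i) sinhc =
      expPS (PowerSeries.mk fun m =>
        if m ≠ 0 ∧ Even m then
          (4 : ℚ) ^ (m / 2) * bernoulli m * psum m x / (m * m.factorial)
        else 0) := by
  rw [← sum_rescale_logSinhc]
  have h0 : constantCoeff (∑ i, rescale (x i) logSinhc) = 0 := by
    simp [← coeff_zero_eq_constantCoeff_apply, coeff_rescale, logSinhc]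
  refine eq_of_derivative_eq_mul_self
    (derivative_prod_eq_mul_prod _ _ _ fun i _ => derivative_rescale_sinhc (x i))
    (derivative_expPS h0) ?_
  rw [constantCoeff_expPS, map_prod]
  exact prod_eq_one fun i _ => constantCoeff_rescale_sinhc (x i)

theorem stmt16 (k : ℕ) (hk : 1 ≤ k) (x : Fin k → ℚ) :
    ∏ i, PowerSeries.rescale (x i) sinhc =
      expPS (PowerSeries.mk fun m =>
        if m ≠ 0 ∧ Even m then
          (4 : ℚ) ^ (m / 2) * bernoulli m * psum m x / (m * m.factorial)
        else 0) :=
  stmt16_general k x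
end
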